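/- arXiv:2006.05345 — 6 statements merged into one kernel-verified Lean document; each statement's English description precedes it below -/
import Mathlib

section
/- Let ‖·‖ be a sub-multiplicative matrix norm and A, Â be square matrices with Σ_{l=0}^∞ ‖A^l‖ =: C_A < ∞ and ‖Â − A‖ · C_A < 1. Then Σ_{l=0}^∞ ‖Â^l‖ ≤ C_A / (1 − ‖Â − A‖ C_A). -/
/-!
Write `E = Â - A`. The noncommutative telescoping identity
`Â^(l+1) - A^(l+1) = ∑_{i ≤ l} A^i E Â^(l-i)` gives, for `a l = N(A^l)` and `b l = N(Â^l)`,
the renewal inequality `b (l+1) ≤ a (l+1) + N(E) ∑_{i ≤ l} a i b (l-i)`. Summing over `l < n`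
and bounding the Cauchy product by the product of partial sums yields
`∑_{l<n} b l ≤ C_A + N(E) C_A ∑_{l<n} b l`, which bounds every partial sum of `b`
by `C_A / (1 - N(E) C_A)`.
-/

open Finset

theorem pow_succ_sub_pow_succ_eq_sum {R : Type*} [Ring R] (x y : R) (n : ℕ) :
    y ^ (n + 1) - x ^ (n + 1) = ∑ i ∈ range (n + 1), x ^ i * (y - x) * y ^ (n - i) := by
  induction n with
  | zero => simp
  | succ n ih =>
    have hshift : ∀ i ∈ range (n + 1),
        x ^ i * (y - x) * y ^ (n + 1 - i) = x ^ i * (y - x) * y ^ (n - i) * y := by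
      intro i hi
      rw [mul_assoc _ (y ^ (n - i)), ← pow_succ, Nat.sub_add_comm (by simpa using mem_range.1 hi)]
    rw [sum_range_succ, sum_congr rfl hshift, ← sum_mul, ← ih, Nat.sub_self, pow_zero, mul_one]
    noncomm_ring

theorem le_pow_succ_add_mul_sum {R : Type*} [Ring R] (N : R → ℝ)
    (hN_nonneg : ∀ x, 0 ≤ N x) (hN_add : ∀ x y, N (x + y) ≤ N x + N y)
    (hN_mul : ∀ x y, N (x * y) ≤ N x * N y) (x y : R) (n : ℕ) :
    N (y ^ (n + 1)) ≤
      N (x ^ (n + 1)) + N (y - x) * ∑ i ∈ range (n + 1), N (x ^ i) * N (y ^ (n - i)) := by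
  calc N (y ^ (n + 1))
      = N (x ^ (n + 1) + ∑ i ∈ range (n + 1), x ^ i * (y - x) * y ^ (n - i)) := by
        rw [← pow_succ_sub_pow_succ_eq_sum, add_sub_cancel]
    _ ≤ N (x ^ (n + 1)) + ∑ i ∈ range (n + 1), N (x ^ i * (y - x) * y ^ (n - i)) :=
        (hN_add _ _).trans (add_le_add_right
          (le_sum_nonempty_of_subadditive N hN_add nonempty_range_add_one _) _)
    _ ≤ N (x ^ (n + 1)) + N (y - x) * ∑ i ∈ range (n + 1), N (x ^ i) * N (y ^ (n - i)) := by
        rw [mul_sum]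
        gcongr with i
        calc N (x ^ i * (y - x) * y ^ (n - i))
            ≤ N (x ^ i) * N (y - x) * N (y ^ (n - i)) :=
              (hN_mul _ _).trans (mul_le_mul_of_nonneg_right (hN_mul _ _) (hN_nonneg _))
          _ = N (y - x) * (N (x ^ i) * N (y ^ (n - i))) := by ring

theorem sum_range_sum_mul_sub_le_mul_sum {a b : ℕ → ℝ} (ha : ∀ n, 0 ≤ a n) (hb : ∀ n, 0 ≤ b n)
    (n : ℕ) :
    ∑ l ∈ range n, ∑ i ∈ range (l + 1), a i * b (l - i) ≤
      (∑ i ∈ range n, a i) * ∑ j ∈ range n, b j := by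
  rw [sum_range_diag_flip n (fun i j => a i * b j), sum_mul]
  gcongr with i
  rw [mul_sum]
  exact sum_le_sum_of_subset_of_nonneg (range_subset_range.2 (Nat.sub_le n i))
    fun j _ _ => mul_nonneg (ha i) (hb j)

section Renewal

variable {a b : ℕ → ℝ} {C ε : ℝ}

theorem sum_range_le_of_renewal (ha : ∀ n, 0 ≤ a n) (hb : ∀ n, 0 ≤ b n) (hsum : HasSum a C)
    (hε : 0 ≤ ε) (hsmall : ε * C < 1) (h0 : b 0 ≤ a 0)
    (hsucc : ∀ l, b (l + 1) ≤ a (l + 1) + ε * ∑ i ∈ range (l + 1), a i * b (l - i)) (n : ℕ) :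
    ∑ l ∈ range n, b l ≤ C / (1 - ε * C) := by
  have hpartial : ∀ m, ∑ l ∈ range m, a l ≤ C :=
    fun m => sum_le_hasSum (range m) (fun i _ => ha i) hsum
  have hB : 0 ≤ ∑ l ∈ range n, b l := sum_nonneg fun l _ => hb l
  have hconv : ∑ l ∈ range n, ∑ i ∈ range (l + 1), a i * b (l - i) ≤ C * ∑ l ∈ range n, b l :=
    (sum_range_sum_mul_sub_le_mul_sum ha hb n).trans
      (mul_le_mul_of_nonneg_right (hpartial n) hB)
  have hrenewal : ∑ l ∈ range (n + 1), b l ≤ C + ε * C * ∑ l ∈ range n, b l :=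
    calc ∑ l ∈ range (n + 1), b l
        ≤ ∑ l ∈ range (n + 1), a l +
            ε * ∑ l ∈ range n, ∑ i ∈ range (l + 1), a i * b (l - i) := by
          rw [sum_range_succ', sum_range_succ' a, mul_sum, add_right_comm,
            ← sum_add_distrib]
          exact add_le_add (sum_le_sum fun l _ => hsucc l) h0
      _ ≤ C + ε * C * ∑ l ∈ range n, b l := by
          rw [mul_assoc]
          exact add_le_add (hpartial _) (mul_le_mul_of_nonneg_left hconv hε)
  have hmono : ∑ l ∈ range n, b l ≤ ∑ l ∈ range (n + 1), b l :=
    sum_le_sum_of_subset_of_nonneg (range_subset_range.2 n.le_succ) fun l _ _ => hb l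
  rw [le_div_iff₀ (by linarith)]
  linarith

theorem summable_and_tsum_le_of_renewal (ha : ∀ n, 0 ≤ a n) (hb : ∀ n, 0 ≤ b n)
    (hsum : HasSum a C) (hε : 0 ≤ ε) (hsmall : ε * C < 1) (h0 : b 0 ≤ a 0)
    (hsucc : ∀ l, b (l + 1) ≤ a (l + 1) + ε * ∑ i ∈ range (l + 1), a i * b (l - i)) :
    Summable b ∧ ∑' l, b l ≤ C / (1 - ε * C) :=
  have hpartial := sum_range_le_of_renewal ha hb hsum hε hsmall h0 hsucc
  ⟨summable_of_sum_range_le hb hpartial, Real.tsum_le_of_sum_range_le hb hpartial⟩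

end Renewal

theorem neumann_series_perturbation_general (d : ℕ) (N : Matrix (Fin d) (Fin d) ℝ → ℝ)
    (hN_nonneg : ∀ M, 0 ≤ N M)
    (hN_add : ∀ M₁ M₂, N (M₁ + M₂) ≤ N M₁ + N M₂)
    (hN_mul : ∀ M₁ M₂, N (M₁ * M₂) ≤ N M₁ * N M₂)
    (A Ahat : Matrix (Fin d) (Fin d) ℝ) (CA : ℝ)
    (hsum : HasSum (fun l : ℕ => N (A ^ l)) CA)
    (hsmall : N (Ahat - A) * CA < 1) :
    Summable (fun l : ℕ => N (Ahat ^ l)) ∧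
      (∑' l : ℕ, N (Ahat ^ l)) ≤ CA / (1 - N (Ahat - A) * CA) :=
  summable_and_tsum_le_of_renewal (fun _ => hN_nonneg _) (fun _ => hN_nonneg _) hsum
    (hN_nonneg _) hsmall (by simp only [pow_zero, le_refl])
    (le_pow_succ_add_mul_sum N hN_nonneg hN_add hN_mul A Ahat)

/-- if `N` is a sub-multiplicative matrix norm,
`Σ_l N(A^l) = C_A < ∞` and `N(Â − A) · C_A < 1`, then the series
`Σ_l N(Â^l)` converges and is bounded by `C_A / (1 − N(Â − A) C_A)`. -/
theorem neumann_series_perturbation (d : ℕ) (N : Matrix (Fin d) (Fin d) ℝ → ℝ)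
    (hN_nonneg : ∀ M, 0 ≤ N M)
    (hN_add : ∀ M₁ M₂, N (M₁ + M₂) ≤ N M₁ + N M₂)
    (hN_smul : ∀ (c : ℝ) M, N (c • M) = |c| * N M)
    (hN_mul : ∀ M₁ M₂, N (M₁ * M₂) ≤ N M₁ * N M₂)
    (A Ahat : Matrix (Fin d) (Fin d) ℝ) (CA : ℝ)
    (hsum : HasSum (fun l : ℕ => N (A ^ l)) CA)
    (hsmall : N (Ahat - A) * CA < 1) :
    Summable (fun l : ℕ => N (Ahat ^ l)) ∧
      (∑' l : ℕ, N (Ahat ^ l)) ≤ CA / (1 - N (Ahat - A) * CA) :=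
  neumann_series_perturbation_general d N hN_nonneg hN_add hN_mul A Ahat CA hsum hsmall
end

section
/- The adaptive Lasso thresholding function THR_λ(z) = z · max(0, 1 − |λ/z|^ν) with ν ≥ 1 satisfies the three thresholding conditions: (1) |THR_λ(z)| ≤ c|y| for all z,y with |z−y| ≤ λ, for some constant c; (2) THR_λ(z) = 0 for |z| ≤ λ; (3) |THR_λ(z) − z| ≤ λ for all z ∈ R. -/
/-- Adaptive Lasso thresholding at level `lam` with exponent `ν`:
`z · max(0, 1 − |λ/z|^ν)`, with value `0` at `z = 0`. -/
noncomputable def adaLassoThr (lam ν z : ℝ) : ℝ :=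
  if z = 0 then 0 else z * max 0 (1 - |lam / z| ^ ν)

/-!
Above the threshold, `THR_λ(z) = z (1 - t^ν)` with `t = λ / |z| ∈ [0, 1)`. Bernoulli's inequality
`1 - t^ν ≤ ν (1 - t)` gives `|THR_λ(z)| ≤ ν (|z| - λ) ≤ ν |y|` whenever `|z - y| ≤ λ`, and
`t^ν ≤ t` gives `|THR_λ(z) - z| = |z| t^ν ≤ |z| t = λ`.
-/

lemma one_sub_rpow_le_mul_one_sub {t ν : ℝ} (ht : 0 ≤ t) (hν : 1 ≤ ν) :
    1 - t ^ ν ≤ ν * (1 - t) := by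
  have h := one_add_mul_self_le_rpow_one_add (s := t - 1) (by linarith) hν
  rw [add_sub_cancel] at h
  linarith [mul_sub ν t 1, mul_sub ν 1 t]

lemma adaLassoThr_eq_zero_of_abs_le {lam ν z : ℝ} (hν : 0 ≤ ν) (hz : |z| ≤ lam) :
    adaLassoThr lam ν z = 0 := by
  unfold adaLassoThr
  split_ifs with hz0
  · rfl
  have ht : 1 ≤ |lam / z| := by
    rw [abs_div, one_le_div (abs_pos.2 hz0)]
    exact hz.trans (le_abs_self lam)
  rw [max_eq_left (by linarith [Real.one_le_rpow ht hν]), mul_zero]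

lemma div_abs_rpow_le_one {lam ν z : ℝ} (hlam : 0 ≤ lam) (hν : 0 ≤ ν) (hz : lam < |z|) :
    (lam / |z|) ^ ν ≤ 1 :=
  Real.rpow_le_one (by positivity) ((div_le_one (hlam.trans_lt hz)).2 hz.le) hν

lemma adaLassoThr_of_lt_abs {lam ν z : ℝ} (hlam : 0 ≤ lam) (hν : 0 ≤ ν) (hz : lam < |z|) :
    adaLassoThr lam ν z = z * (1 - (lam / |z|) ^ ν) := by
  rw [adaLassoThr, if_neg (abs_pos.1 (hlam.trans_lt hz)), abs_div, abs_of_nonneg hlam,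
    max_eq_right (sub_nonneg.2 (div_abs_rpow_le_one hlam hν hz))]

lemma abs_adaLassoThr_le {lam ν z y : ℝ} (hlam : 0 ≤ lam) (hν : 1 ≤ ν) (hzy : |z - y| ≤ lam) :
    |adaLassoThr lam ν z| ≤ ν * |y| := by
  rcases le_or_gt |z| lam with hz | hz
  · rw [adaLassoThr_eq_zero_of_abs_le (by linarith) hz, abs_zero]
    exact mul_nonneg (by linarith) (abs_nonneg y)
  have hzpos : 0 < |z| := hlam.trans_lt hz
  rw [adaLassoThr_of_lt_abs hlam (by linarith) hz, abs_mul,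
    abs_of_nonneg (sub_nonneg.2 (div_abs_rpow_le_one hlam (by linarith) hz))]
  calc |z| * (1 - (lam / |z|) ^ ν) ≤ |z| * (ν * (1 - lam / |z|)) := by
        gcongr
        exact one_sub_rpow_le_mul_one_sub (by positivity) hν
    _ = ν * (|z| - lam) := by field_simp
    _ ≤ ν * |y| := by
        gcongr
        linarith [abs_sub_abs_le_abs_sub z y]

lemma abs_adaLassoThr_sub_self_le {lam ν : ℝ} (z : ℝ) (hlam : 0 ≤ lam) (hν : 1 ≤ ν) :
    |adaLassoThr lam ν z - z| ≤ lam := by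
  rcases le_or_gt |z| lam with hz | hz
  · rwa [adaLassoThr_eq_zero_of_abs_le (by linarith) hz, zero_sub, abs_neg]
  have hzpos : 0 < |z| := hlam.trans_lt hz
  rw [adaLassoThr_of_lt_abs hlam (by linarith) hz, mul_one_sub, sub_sub_cancel_left, abs_neg,
    abs_mul, abs_of_nonneg (Real.rpow_nonneg (by positivity) ν)]
  calc |z| * (lam / |z|) ^ ν ≤ |z| * (lam / |z|) := by
        gcongr
        exact Real.rpow_le_self_of_le_one (by positivity) ((div_le_one hzpos).2 hz.le) hν
    _ = lam := mul_div_cancel₀ lam hzpos.ne'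

/-- the adaptive Lasso thresholding function (`ν ≥ 1`) satisfies
the three thresholding conditions. -/
theorem adaLassoThr_is_thresholding (lam ν : ℝ) (hlam : 0 ≤ lam) (hν : 1 ≤ ν) :
    (∃ c : ℝ, 0 < c ∧ ∀ z y : ℝ, |z - y| ≤ lam → |adaLassoThr lam ν z| ≤ c * |y|) ∧
    (∀ z : ℝ, |z| ≤ lam → adaLassoThr lam ν z = 0) ∧
    (∀ z : ℝ, |adaLassoThr lam ν z - z| ≤ lam) :=
  ⟨⟨ν, by linarith, fun _ _ => abs_adaLassoThr_le hlam hν⟩,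
    fun _ => adaLassoThr_eq_zero_of_abs_le (by linarith),
    fun z => abs_adaLassoThr_sub_self_le z hlam hν⟩
end

section
/- Let λ ≥ 0, q ∈ [0,1), and let THR_λ be a thresholding function satisfying the three thresholding conditions with constant c. Let a = (a_i)_{i=1}^d and â = (â_i)_{i=1}^d be real vectors with max_i |a_i − â_i| ≤ λ and Σ_{i=1}^d |a_i|^q ≤ s. Then Σ_{i=1}^d |a_i − THR_λ(â_i)| ≤ (4 + c) s λ^{1−q}. -/
open Finset

/-- `|a|^q` with the convention that for `q = 0` it is the indicator
`1(a ≠ 0)` (weak-ℓ_q ball weight). -/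
noncomputable def wq (q a : ℝ) : ℝ := if a = 0 then 0 else |a| ^ q

/-- thresholding error bound on approximately sparse vectors:
if `max_i |a_i − â_i| ≤ λ` and `Σ_i |a_i|^q ≤ s`, then
`Σ_i |a_i − THR_λ(â_i)| ≤ (4 + c) s λ^{1−q}`. -/
theorem thresholding_vector_bound (d : ℕ) (lam q s c : ℝ)
    (hlam : 0 ≤ lam) (hq0 : 0 ≤ q) (hq1 : q < 1) (hc : 0 < c)
    (THR : ℝ → ℝ)
    (hTHR1 : ∀ z y : ℝ, |z - y| ≤ lam → |THR z| ≤ c * |y|)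
    (hTHR2 : ∀ z : ℝ, |z| ≤ lam → THR z = 0)
    (hTHR3 : ∀ z : ℝ, |THR z - z| ≤ lam)
    (a ahat : Fin d → ℝ)
    (hclose : ∀ i, |a i - ahat i| ≤ lam)
    (hsparse : (∑ i, wq q (a i)) ≤ s) :
    (∑ i, |a i - THR (ahat i)|) ≤ (4 + c) * s * lam ^ (1 - q) := by
  have hpow : (0:ℝ) ≤ lam ^ (1 - q) := Real.rpow_nonneg hlam _
  have key : ∀ i, |a i - THR (ahat i)| ≤ (4 + c) * wq q (a i) * lam ^ (1 - q) := by
    intro i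
    have hcl : |ahat i - a i| ≤ lam := by rw [abs_sub_comm]; exact hclose i
    by_cases h0 : a i = 0
    · have hT : |THR (ahat i)| ≤ c * |a i| := hTHR1 _ _ hcl
      rw [h0] at hT
      simp only [abs_zero, mul_zero] at hT
      have : |a i - THR (ahat i)| = |THR (ahat i)| := by rw [h0]; simp [abs_neg]
      rw [this]
      simp [wq, h0]
      exact abs_eq_zero.mp (le_antisymm hT (abs_nonneg _))
    · have habs : 0 < |a i| := abs_pos.mpr h0
      have hwq : wq q (a i) = |a i| ^ q := by simp [wq, h0]
      have hqnn : (0:ℝ) ≤ |a i| ^ q := Real.rpow_nonneg (abs_nonneg _) _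
      have hid : |a i| ^ q * |a i| ^ (1 - q) = |a i| := by
        rw [← Real.rpow_add habs]; norm_num
      rw [hwq]
      by_cases hle : |a i| ≤ lam
      · have hT : |THR (ahat i)| ≤ c * |a i| := hTHR1 _ _ hcl
        have h1 : |a i - THR (ahat i)| ≤ (1 + c) * |a i| := by
          calc |a i - THR (ahat i)| ≤ |a i| + |THR (ahat i)| := abs_sub _ _
            _ ≤ |a i| + c * |a i| := by linarith
            _ = (1 + c) * |a i| := by ring
        have h2 : |a i| ^ (1 - q) ≤ lam ^ (1 - q) :=
          Real.rpow_le_rpow (abs_nonneg _) hle (by linarith)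
        calc |a i - THR (ahat i)| ≤ (1 + c) * |a i| := h1
          _ = (1 + c) * (|a i| ^ q * |a i| ^ (1 - q)) := by rw [hid]
          _ ≤ (1 + c) * (|a i| ^ q * lam ^ (1 - q)) := by
              apply mul_le_mul_of_nonneg_left _ (by linarith)
              exact mul_le_mul_of_nonneg_left h2 hqnn
          _ ≤ (4 + c) * |a i| ^ q * lam ^ (1 - q) := by
              have : (0:ℝ) ≤ |a i| ^ q * lam ^ (1 - q) := mul_nonneg hqnn hpow
              nlinarith
      · push_neg at hle
        have hT : |ahat i - THR (ahat i)| ≤ lam := by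
          rw [abs_sub_comm]; exact hTHR3 _
        have h1 : |a i - THR (ahat i)| ≤ 2 * lam := by
          calc |a i - THR (ahat i)| ≤ |a i - ahat i| + |ahat i - THR (ahat i)| :=
                abs_sub_le _ _ _
            _ ≤ 2 * lam := by linarith [hclose i]
        have hlid : lam ^ q * lam ^ (1 - q) = lam := by
          rw [← Real.rpow_add' hlam (by norm_num)]; norm_num
        have h2 : lam ^ q ≤ |a i| ^ q :=
          Real.rpow_le_rpow hlam (le_of_lt hle) hq0
        calc |a i - THR (ahat i)| ≤ 2 * lam := h1
          _ = 2 * (lam ^ q * lam ^ (1 - q)) := by rw [hlid]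
          _ ≤ 2 * (|a i| ^ q * lam ^ (1 - q)) := by
              apply mul_le_mul_of_nonneg_left _ (by norm_num)
              exact mul_le_mul_of_nonneg_right h2 hpow
          _ ≤ (4 + c) * |a i| ^ q * lam ^ (1 - q) := by
              have : (0:ℝ) ≤ |a i| ^ q * lam ^ (1 - q) := mul_nonneg hqnn hpow
              nlinarith
  calc (∑ i, |a i - THR (ahat i)|)
      ≤ ∑ i, (4 + c) * wq q (a i) * lam ^ (1 - q) :=
        Finset.sum_le_sum (fun i _ => key i)
    _ = (4 + c) * (∑ i, wq q (a i)) * lam ^ (1 - q) := by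
        rw [← Finset.sum_mul, ← Finset.mul_sum]
    _ ≤ (4 + c) * s * lam ^ (1 - q) := by
        apply mul_le_mul_of_nonneg_right _ hpow
        exact mul_le_mul_of_nonneg_left hsparse (by linarith)
end

section
/- Let 𝔸 be the companion matrix of the stacked VAR(1) form of a VAR(p) model with coefficient matrices A_1,…,A_p, and THR_λ the entrywise thresholding estimator of 𝔸 obtained by thresholding estimates Â_k. If (A_1,…,A_p) ∈ M(q,s,M,p), s ≥ 1, and max_k ‖A_k − Â_k‖_max ≤ λ ≤ 1, then ‖𝔸 − THR_λ(Â)‖_l ≤ (4+c) s λ^{1−q} for both l = 1 and l = ∞, where THR_λ(Â) is the companion matrix built from the thresholded Â_k. -/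
open Finset

/-- Maximum absolute column sum (operator 1-norm). -/
noncomputable def norm1col {m n : Type*} [Fintype m] [Fintype n]
    (A : Matrix m n ℝ) : ℝ := ⨆ j : n, ∑ i, |A i j|

/-- Maximum absolute row sum (operator ∞-norm). -/
noncomputable def normInfRow {m n : Type*} [Fintype m] [Fintype n]
    (A : Matrix m n ℝ) : ℝ := ⨆ i : m, ∑ j, |A i j|

/-- The approximate sparsity class `M(q,s,M,p)`. -/
def sparsityClass {p d : ℕ} (q s M : ℝ) (A : Fin p → Matrix (Fin d) (Fin d) ℝ) : Prop :=
  (∀ j k, (∑ i, wq q (A k i j)) ≤ s) ∧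
  (∀ k, norm1col (A k) ≤ M) ∧
  (∀ i, (∑ k, ∑ j, wq q (A k i j)) ≤ s) ∧
  ((∑ k, normInfRow (A k)) ≤ M)

/-- The `dp × dp` companion matrix of a VAR(p) model: first block row
`(A_1, …, A_p)`, identities on the subdiagonal blocks, zeros elsewhere. -/
def companion {p d : ℕ} (A : Fin p → Matrix (Fin d) (Fin d) ℝ) :
    Matrix (Fin p × Fin d) (Fin p × Fin d) ℝ := fun x y =>
  if x.1.val = 0 then A y.1 x.2 y.2
  else if x.1.val = y.1.val + 1 ∧ x.2 = y.2 then 1 else 0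

/-- The companion matrix with only the coefficient blocks (first block row)
thresholded entrywise; the identity blocks are unchanged. -/
noncomputable def thrCompanion {p d : ℕ} (THR : ℝ → ℝ)
    (A : Fin p → Matrix (Fin d) (Fin d) ℝ) :
    Matrix (Fin p × Fin d) (Fin p × Fin d) ℝ :=
  companion (fun k => (A k).map THR)

lemma key_entry (lam q c : ℝ)
    (hlam0 : 0 ≤ lam) (hq0 : 0 ≤ q) (hq1 : q < 1) (hc : 0 < c)
    (THR : ℝ → ℝ)
    (hTHR1 : ∀ z y : ℝ, |z - y| ≤ lam → |THR z| ≤ c * |y|)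
    (hTHR2 : ∀ z : ℝ, |z| ≤ lam → THR z = 0)
    (hTHR3 : ∀ z : ℝ, |THR z - z| ≤ lam)
    (a b : ℝ) (hab : |a - b| ≤ lam) :
    |a - THR b| ≤ (2 + c) * lam ^ (1 - q) * wq q a := by
  have hlq : (0:ℝ) ≤ lam ^ (1 - q) := Real.rpow_nonneg hlam0 _
  by_cases ha : a = 0
  · subst ha
    have hb : |b| ≤ lam := by rwa [zero_sub, abs_neg] at hab
    rw [hTHR2 b hb]
    simp [wq]
  · have hwq : wq q a = |a| ^ q := if_neg ha
    have ha0 : (0:ℝ) < |a| := abs_pos.mpr ha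
    have haq : (0:ℝ) ≤ |a| ^ q := Real.rpow_nonneg (abs_nonneg a) _
    rw [hwq]
    by_cases hla : |a| ≤ lam
    · have h1 : |THR b| ≤ c * |a| := hTHR1 b a (by rwa [abs_sub_comm])
      have h0 : |a - THR b| ≤ |a| + |THR b| := abs_sub _ _
      have hsplit : |a| ^ (1 - q) * |a| ^ q = |a| := by
        rw [← Real.rpow_add ha0]; norm_num
      have hle : |a| ^ (1 - q) ≤ lam ^ (1 - q) :=
        Real.rpow_le_rpow (abs_nonneg a) hla (by linarith)
      calc |a - THR b| ≤ (1 + c) * |a| := by linarith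
        _ = (1 + c) * (|a| ^ (1 - q) * |a| ^ q) := by rw [hsplit]
        _ ≤ (1 + c) * (lam ^ (1 - q) * |a| ^ q) := by gcongr
        _ ≤ (2 + c) * lam ^ (1 - q) * |a| ^ q := by
            nlinarith [mul_nonneg hlq haq]
    · push_neg at hla
      have h2 : |b - THR b| ≤ lam := by rw [abs_sub_comm]; exact hTHR3 b
      have h0 : |a - THR b| ≤ 2 * lam := by
        calc |a - THR b| ≤ |a - b| + |b - THR b| := abs_sub_le _ _ _
        _ ≤ 2 * lam := by linarith
      rcases eq_or_lt_of_le hlam0 with hl0 | hl0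
      · have : |a - THR b| ≤ 0 := by rw [← hl0] at h0; linarith
        have hrhs : (0:ℝ) ≤ (2 + c) * lam ^ (1 - q) * |a| ^ q :=
          mul_nonneg (mul_nonneg (by linarith) hlq) haq
        linarith
      · have hsplit : lam ^ (1 - q) * lam ^ q = lam := by
          rw [← Real.rpow_add hl0]; norm_num
        have hle : lam ^ q ≤ |a| ^ q :=
          Real.rpow_le_rpow hlam0 hla.le hq0
        calc |a - THR b| ≤ 2 * lam := h0
          _ = 2 * (lam ^ (1 - q) * lam ^ q) := by rw [hsplit]
          _ ≤ 2 * (lam ^ (1 - q) * |a| ^ q) := by gcongr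
          _ ≤ (2 + c) * lam ^ (1 - q) * |a| ^ q := by
              nlinarith [mul_nonneg hlq haq]

/-- thresholding the coefficient blocks of the companion matrix
of an approximately sparse VAR(p) gives
`‖𝔸 − THR_λ(Â)‖_l ≤ (4+c) s λ^{1−q}` for `l = 1` and `l = ∞`. -/
theorem thresholding_companion_bounds (p d : ℕ) (lam q s M c : ℝ)
    (hlam0 : 0 ≤ lam) (hlam1 : lam ≤ 1) (hs : 1 ≤ s)
    (hq0 : 0 ≤ q) (hq1 : q < 1) (hc : 0 < c)
    (THR : ℝ → ℝ)
    (hTHR1 : ∀ z y : ℝ, |z - y| ≤ lam → |THR z| ≤ c * |y|)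
    (hTHR2 : ∀ z : ℝ, |z| ≤ lam → THR z = 0)
    (hTHR3 : ∀ z : ℝ, |THR z - z| ≤ lam)
    (A Ahat : Fin p → Matrix (Fin d) (Fin d) ℝ)
    (hA : sparsityClass q s M A)
    (hclose : ∀ k i j, |A k i j - Ahat k i j| ≤ lam) :
    norm1col (companion A - thrCompanion THR Ahat) ≤ (4 + c) * s * lam ^ (1 - q) ∧
    normInfRow (companion A - thrCompanion THR Ahat) ≤ (4 + c) * s * lam ^ (1 - q) := by
  set L : ℝ := (2 + c) * lam ^ (1 - q) with hL
  have hlq : (0:ℝ) ≤ lam ^ (1 - q) := Real.rpow_nonneg hlam0 _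
  have hLnn : 0 ≤ L := mul_nonneg (by linarith) hlq
  have hRnn : 0 ≤ (4 + c) * s * lam ^ (1 - q) :=
    mul_nonneg (mul_nonneg (by linarith) (by linarith)) hlq
  have hLs : L * s ≤ (4 + c) * s * lam ^ (1 - q) := by
    rw [hL]; nlinarith [mul_nonneg hlq (by linarith : (0:ℝ) ≤ s)]
  have hE : ∀ (k : Fin p) (i j : Fin d),
      |A k i j - THR (Ahat k i j)| ≤ L * wq q (A k i j) := fun k i j =>
    key_entry lam q c hlam0 hq0 hq1 hc THR hTHR1 hTHR2 hTHR3 _ _ (hclose k i j)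
  have hD : ∀ (b : Fin p) (i : Fin d) (y : Fin p × Fin d),
      |(companion A - thrCompanion THR Ahat) (b, i) y| =
        if b.val = 0 then |A y.1 i y.2 - THR (Ahat y.1 i y.2)| else 0 := by
    intro b i y
    simp only [Matrix.sub_apply, companion, thrCompanion, Matrix.map_apply]
    split_ifs <;> simp
  constructor
  · refine Real.iSup_le (fun y => ?_) hRnn
    haveI : NeZero p := ⟨(y.1.pos).ne'⟩
    rw [Fintype.sum_prod_type]
    calc ∑ b : Fin p, ∑ i : Fin d, |(companion A - thrCompanion THR Ahat) (b, i) y|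
        = ∑ b : Fin p, (if b = 0 then
            ∑ i : Fin d, |A y.1 i y.2 - THR (Ahat y.1 i y.2)| else 0) := by
          refine Finset.sum_congr rfl fun b _ => ?_
          by_cases hb : b = 0
          · subst hb
            rw [if_pos rfl]
            exact Finset.sum_congr rfl fun i _ => by rw [hD 0 i y, if_pos (by simp)]
          · have hb' : b.val ≠ 0 := fun h => hb (Fin.ext (by simp [h]))
            rw [if_neg hb]
            exact Finset.sum_eq_zero fun i _ => by rw [hD b i y, if_neg hb']
      _ = ∑ i : Fin d, |A y.1 i y.2 - THR (Ahat y.1 i y.2)| := by simp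
      _ ≤ ∑ i : Fin d, L * wq q (A y.1 i y.2) :=
          Finset.sum_le_sum fun i _ => hE y.1 i y.2
      _ = L * ∑ i : Fin d, wq q (A y.1 i y.2) := by rw [Finset.mul_sum]
      _ ≤ L * s := mul_le_mul_of_nonneg_left (hA.1 y.2 y.1) hLnn
      _ ≤ (4 + c) * s * lam ^ (1 - q) := hLs
  · refine Real.iSup_le (fun x => ?_) hRnn
    rw [Fintype.sum_prod_type]
    by_cases hx : x.1.val = 0
    · calc ∑ k : Fin p, ∑ j : Fin d, |(companion A - thrCompanion THR Ahat) x (k, j)|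
          = ∑ k : Fin p, ∑ j : Fin d, |A k x.2 j - THR (Ahat k x.2 j)| := by
            refine Finset.sum_congr rfl fun k _ => Finset.sum_congr rfl fun j _ => ?_
            rw [show x = (x.1, x.2) from rfl, hD x.1 x.2 (k, j), if_pos hx]
        _ ≤ ∑ k : Fin p, ∑ j : Fin d, L * wq q (A k x.2 j) :=
            Finset.sum_le_sum fun k _ => Finset.sum_le_sum fun j _ => hE k x.2 j
        _ = L * ∑ k : Fin p, ∑ j : Fin d, wq q (A k x.2 j) := by
            simp [Finset.mul_sum]
        _ ≤ L * s := mul_le_mul_of_nonneg_left (hA.2.2.1 x.2) hLnn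
        _ ≤ (4 + c) * s * lam ^ (1 - q) := hLs
    · have hz : ∀ (k : Fin p) (j : Fin d),
          |(companion A - thrCompanion THR Ahat) x (k, j)| = 0 := by
        intro k j
        rw [show x = (x.1, x.2) from rfl, hD x.1 x.2 (k, j), if_neg hx]
      simp only [hz, Finset.sum_const_zero]
      exact hRnn
end

section
/- Let A, Â, Σ, Σ̂ be d×d real matrices and ‖·‖ a sub-multiplicative matrix norm with C_A := Σ_{j≥0}‖A^j‖² < ∞, C_{Aᵀ} := Σ_{j≥0}‖(A^j)ᵀ‖² < ∞, C_Â := Σ_{j≥0}‖Â^j‖² < ∞, C_{Âᵀ} := Σ_{j≥0}‖(Â^j)ᵀ‖² < ∞, and C_Σ := ‖Σ‖. Define Γ = Σ_{j=0}^∞ A^j Σ (A^j)ᵀ and Γ̂ = Σ_{j=0}^∞ Â^j Σ̂ (Â^j)ᵀ (assuming both series converge). Then ‖Γ̂ − Γ‖ ≤ ‖Â − A‖ C_Σ (C_Â + C_{Aᵀ})(C_A + C_{Aᵀ})/4 + ‖Σ̂ − Σ‖ (C_Â + C_{Aᵀ})/2 + ‖Âᵀ − Aᵀ‖ (C_Σ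 + ‖Σ̂ − Σ‖)(C_Â + C_{Aᵀ})(C_Â + C_{Âᵀ})/4. -/
/-!
Write `Γ̂ - Γ = ∑ₛ Dₛ` with
`Dₛ = (Âˢ - Aˢ) Σ (Aˢ)ᵀ + Âˢ (Σ̂ - Σ) (Aˢ)ᵀ + Âˢ Σ̂ ((Âˢ)ᵀ - (Aˢ)ᵀ)`.
Telescoping `Âˢ - Aˢ = ∑_{i<s} Âⁱ (Â - A) A^(s-1-i)` and bounding every product of two
norms by `ab ≤ (a² + b²)/2` makes the bounds on the first and last pieces Cauchy products of
square-summable norm sequences, so their sums over `s` factor into products of the constants `C`.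
A seminorm on a finite-dimensional space is continuous, so the termwise bounds pass to the limit.
-/

open Finset

theorem pow_sub_pow_eq_sum {R : Type*} [Ring R] (x y : R) (n : ℕ) :
    x ^ n - y ^ n = ∑ i ∈ range n, x ^ i * (x - y) * y ^ (n - 1 - i) := by
  have hterm : ∀ i ∈ range n, x ^ i * (x - y) * y ^ (n - 1 - i) =
      x ^ (i + 1) * y ^ (n - (i + 1)) - x ^ i * y ^ (n - i) := by
    intro i hi
    have hni : n - i = n - 1 - i + 1 := by have := mem_range.mp hi; omega
    rw [hni, pow_succ x i, pow_succ' y (n - 1 - i), show n - (i + 1) = n - 1 - i by omega]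
    noncomm_ring
  rw [sum_congr rfl hterm, sum_range_sub (fun i => x ^ i * y ^ (n - i))]
  simp

theorem HasSum.comp_add_one {G : Type*} [AddCommGroup G] [TopologicalSpace G]
    [IsTopologicalAddGroup G] {f : ℕ → G} {a : G} (hf : HasSum f a) :
    HasSum (fun j => f (j + 1)) (a - f 0) := by
  simpa using (hasSum_nat_add_iff' 1).mpr hf

theorem HasSum.sum_range_mul_sub_one {u v : ℕ → ℝ} {a b : ℝ} (hu : HasSum u a)
    (hv : HasSum v b) : HasSum (fun s => ∑ i ∈ range s, u i * v (s - 1 - i)) (a * b) := by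
  rw [← hasSum_nat_add_iff' 1]
  simp only [sum_range_one, range_zero, sum_empty, sub_zero, Nat.add_sub_cancel]
  rw [← hu.tsum_eq, ← hv.tsum_eq]
  exact hasSum_sum_range_mul_of_summable_norm (summable_norm_iff.mpr hu.summable)
    (summable_norm_iff.mpr hv.summable)

theorem Seminorm.le_of_hasSum {E ι : Type*} [NormedAddCommGroup E] [NormedSpace ℝ E]
    [FiniteDimensional ℝ E] (p : Seminorm ℝ E) {f : ι → E} {g : ι → ℝ} {x : E} {a : ℝ}
    (hf : HasSum f x) (hg : HasSum g a) (hfg : ∀ i, p (f i) ≤ g i) : p x ≤ a := by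
  have hp : Continuous p := p.convexOn.locallyLipschitz.continuous
  refine le_of_tendsto_of_tendsto' ((hp.tendsto x).comp hf) hg fun s => ?_
  exact (le_sum_of_subadditive p (map_zero p).le (map_add_le_add p) s f).trans
    (sum_le_sum fun i _ => hfg i)

theorem mul_le_add_sq_div_two (a b : ℝ) : a * b ≤ (a ^ 2 + b ^ 2) / 2 := by
  linarith [two_mul_le_add_sq a b]

section SubmultiplicativeSeminorm

variable {R : Type*} [NonUnitalNonAssocRing R] [SMul ℝ R] {p : Seminorm ℝ R}
  (hp : ∀ x y, p (x * y) ≤ p x * p y)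
include hp

theorem seminorm_mul_mul_le (x y z : R) : p (x * y * z) ≤ p x * p y * p z :=
  (hp _ _).trans (mul_le_mul_of_nonneg_right (hp x y) (apply_nonneg p z))

theorem seminorm_mul_mul_le_mul_sq_add_sq (x m y : R) :
    p (x * m * y) ≤ p m * ((p x ^ 2 + p y ^ 2) / 2) :=
  calc p (x * m * y) ≤ p x * p m * p y := seminorm_mul_mul_le hp x m y
    _ = p m * (p x * p y) := by ring
    _ ≤ p m * ((p x ^ 2 + p y ^ 2) / 2) :=
        mul_le_mul_of_nonneg_left (mul_le_add_sq_div_two _ _) (apply_nonneg p m)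

end SubmultiplicativeSeminorm

namespace Matrix

variable {n : Type*} [Fintype n] [DecidableEq n] {p : Seminorm ℝ (Matrix n n ℝ)}
  (hp : ∀ X Y, p (X * Y) ≤ p X * p Y) (X Y M : Matrix n n ℝ) (s : ℕ)
include hp

theorem seminorm_pow_sub_pow_mul_mul_transpose_le :
    p ((X ^ s - Y ^ s) * M * (Y ^ s)ᵀ) ≤ p (X - Y) * p M *
      ∑ i ∈ range s, (p (X ^ i) ^ 2 + p ((Y ^ (i + 1))ᵀ) ^ 2) / 2 *
        ((p (Y ^ (s - 1 - i)) ^ 2 + p ((Y ^ (s - 1 - i))ᵀ) ^ 2) / 2) := by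
  rw [pow_sub_pow_eq_sum, sum_mul, sum_mul, mul_sum]
  refine (le_sum_of_subadditive p (map_zero p).le (map_add_le_add p) _ _).trans
    (sum_le_sum fun i hi => ?_)
  set k := s - 1 - i
  have hsplit : (Y ^ s)ᵀ = (Y ^ (i + 1))ᵀ * (Y ^ k)ᵀ := by
    rw [← transpose_mul, ← pow_add]
    congr 2
    have := mem_range.mp hi
    omega
  calc p (X ^ i * (X - Y) * Y ^ k * M * (Y ^ s)ᵀ)
      ≤ p (X ^ i) * p (X - Y) * p (Y ^ k) * p M * (p ((Y ^ (i + 1))ᵀ) * p ((Y ^ k)ᵀ)) := by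
        rw [hsplit]
        refine (seminorm_mul_mul_le hp _ _ _).trans ?_
        gcongr
        exacts [seminorm_mul_mul_le hp _ _ _, hp _ _]
    _ = p (X - Y) * p M *
          (p (X ^ i) * p ((Y ^ (i + 1))ᵀ) * (p (Y ^ k) * p ((Y ^ k)ᵀ))) := by
        ring
    _ ≤ _ := mul_le_mul_of_nonneg_left (mul_le_mul (mul_le_add_sq_div_two _ _)
        (mul_le_add_sq_div_two _ _) (by positivity) (by positivity)) (by positivity)

theorem seminorm_pow_mul_mul_transpose_sub_transpose_le :
    p (X ^ s * M * ((X ^ s)ᵀ - (Y ^ s)ᵀ)) ≤ p (Xᵀ - Yᵀ) * p M *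
      ∑ i ∈ range s, (p (X ^ i) ^ 2 + p ((X ^ i)ᵀ) ^ 2) / 2 *
        ((p (X ^ (s - 1 - i + 1)) ^ 2 + p ((Y ^ (s - 1 - i))ᵀ) ^ 2) / 2) := by
  rw [transpose_pow X s, transpose_pow Y s, pow_sub_pow_eq_sum, mul_sum, mul_sum]
  refine (le_sum_of_subadditive p (map_zero p).le (map_add_le_add p) _ _).trans
    (sum_le_sum fun i hi => ?_)
  set k := s - 1 - i
  have hsplit : X ^ s = X ^ (k + 1) * X ^ i := by
    rw [← pow_add]
    congr 1
    have := mem_range.mp hi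
    omega
  calc p (X ^ s * M * (Xᵀ ^ i * (Xᵀ - Yᵀ) * Yᵀ ^ k))
      ≤ p (X ^ (k + 1)) * p (X ^ i) * p M *
          (p ((X ^ i)ᵀ) * p (Xᵀ - Yᵀ) * p ((Y ^ k)ᵀ)) := by
        rw [hsplit, ← transpose_pow, ← transpose_pow]
        refine (hp _ _).trans ?_
        gcongr
        exacts [seminorm_mul_mul_le hp _ _ _, seminorm_mul_mul_le hp _ _ _]
    _ = p (Xᵀ - Yᵀ) * p M *
          (p (X ^ i) * p ((X ^ i)ᵀ) * (p (X ^ (k + 1)) * p ((Y ^ k)ᵀ))) := by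
        ring
    _ ≤ _ := mul_le_mul_of_nonneg_left (mul_le_mul (mul_le_add_sq_div_two _ _)
        (mul_le_add_sq_div_two _ _) (by positivity) (by positivity)) (by positivity)

theorem seminorm_pow_mul_mul_transpose_sub_pow_mul_mul_transpose_le (M' : Matrix n n ℝ) :
    p (X ^ s * M' * (X ^ s)ᵀ - Y ^ s * M * (Y ^ s)ᵀ) ≤
      p (X - Y) * p M *
        ∑ i ∈ range s, (p (X ^ i) ^ 2 + p ((Y ^ (i + 1))ᵀ) ^ 2) / 2 *
          ((p (Y ^ (s - 1 - i)) ^ 2 + p ((Y ^ (s - 1 - i))ᵀ) ^ 2) / 2) +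
      p (M' - M) * ((p (X ^ s) ^ 2 + p ((Y ^ s)ᵀ) ^ 2) / 2) +
      p (Xᵀ - Yᵀ) * p M' *
        ∑ i ∈ range s, (p (X ^ i) ^ 2 + p ((X ^ i)ᵀ) ^ 2) / 2 *
          ((p (X ^ (s - 1 - i + 1)) ^ 2 + p ((Y ^ (s - 1 - i))ᵀ) ^ 2) / 2) := by
  have hdecomp : X ^ s * M' * (X ^ s)ᵀ - Y ^ s * M * (Y ^ s)ᵀ =
      (X ^ s - Y ^ s) * M * (Y ^ s)ᵀ + X ^ s * (M' - M) * (Y ^ s)ᵀ +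
        X ^ s * M' * ((X ^ s)ᵀ - (Y ^ s)ᵀ) := by
    noncomm_ring
  rw [hdecomp]
  refine (map_add_le_add p _ _).trans (add_le_add ((map_add_le_add p _ _).trans ?_) ?_)
  · exact add_le_add (seminorm_pow_sub_pow_mul_mul_transpose_le hp X Y M s)
      (seminorm_mul_mul_le_mul_sq_add_sq hp _ _ _)
  · exact seminorm_pow_mul_mul_transpose_sub_transpose_le hp X Y M' s

end Matrix

theorem autocovariance_error_bound_general (d : ℕ)
    (N : Matrix (Fin d) (Fin d) ℝ → ℝ)
    (hN_add : ∀ M₁ M₂, N (M₁ + M₂) ≤ N M₁ + N M₂)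
    (hN_smul : ∀ (c : ℝ) M, N (c • M) = |c| * N M)
    (hN_mul : ∀ M₁ M₂, N (M₁ * M₂) ≤ N M₁ * N M₂)
    (A Ahat S Shat : Matrix (Fin d) (Fin d) ℝ)
    (CA CAt CAhat CAhatT : ℝ)
    (hCA : HasSum (fun j : ℕ => N (A ^ j) ^ 2) CA)
    (hCAt : HasSum (fun j : ℕ => N ((A ^ j).transpose) ^ 2) CAt)
    (hCAhat : HasSum (fun j : ℕ => N (Ahat ^ j) ^ 2) CAhat)
    (hCAhatT : HasSum (fun j : ℕ => N ((Ahat ^ j).transpose) ^ 2) CAhatT)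
    (Γ Γhat : Matrix (Fin d) (Fin d) ℝ)
    (hΓ : HasSum (fun j : ℕ => A ^ j * S * (A ^ j).transpose) Γ)
    (hΓhat : HasSum (fun j : ℕ => Ahat ^ j * Shat * (Ahat ^ j).transpose) Γhat) :
    N (Γhat - Γ) ≤
      N (Ahat - A) * N S * (CAhat + CAt) * (CA + CAt) / 4 +
      N (Shat - S) * (CAhat + CAt) / 2 +
      N (Ahat.transpose - A.transpose) * (N S + N (Shat - S)) *
        (CAhat + CAt) * (CAhat + CAhatT) / 4 := by
  obtain ⟨p, rfl⟩ : ∃ p : Seminorm ℝ (Matrix (Fin d) (Fin d) ℝ), ⇑p = N :=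
    ⟨Seminorm.of N hN_add hN_smul, rfl⟩
  let _ : NormedAddCommGroup (Matrix (Fin d) (Fin d) ℝ) := Matrix.normedAddCommGroup
  let _ : NormedSpace ℝ (Matrix (Fin d) (Fin d) ℝ) := Matrix.normedSpace
  have h₁ := ((hCAhat.add hCAt.comp_add_one).div_const 2).sum_range_mul_sub_one
    ((hCA.add hCAt).div_const 2)
  have h₂ := (hCAhat.add hCAt).div_const 2
  have h₃ := ((hCAhat.add hCAhatT).div_const 2).sum_range_mul_sub_one
    ((hCAhat.comp_add_one.add hCAt).div_const 2)
  have hsum := ((h₁.mul_left (p (Ahat - A) * p S)).add (h₂.mul_left (p (Shat - S)))).add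
    (h₃.mul_left (p (Ahat.transpose - A.transpose) * p Shat))
  refine (p.le_of_hasSum (hΓhat.sub hΓ) hsum fun s =>
    Matrix.seminorm_pow_mul_mul_transpose_sub_pow_mul_mul_transpose_le
      hN_mul Ahat A S s Shat).trans ?_
  have hShat : p Shat ≤ p S + p (Shat - S) := by
    simpa using map_add_le_add p S (Shat - S)
  -- the shifted series `h₁`, `h₃` lack their nonnegative `j = 0` terms
  calc _ ≤ p (Ahat - A) * p S * ((CAhat + CAt) / 2 * ((CA + CAt) / 2)) +
        p (Shat - S) * ((CAhat + CAt) / 2) + p (Ahat.transpose - A.transpose) *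
          (p S + p (Shat - S)) * ((CAhat + CAhatT) / 2 * ((CAhat + CAt) / 2)) := by
        gcongr <;> linarith [sq_nonneg (p (A ^ 0).transpose), sq_nonneg (p (Ahat ^ 0)),
          hCA.nonneg fun _ => sq_nonneg _, hCAt.nonneg fun _ => sq_nonneg _,
          hCAhat.nonneg fun _ => sq_nonneg _, hCAhatT.nonneg fun _ => sq_nonneg _,
          h₃.nonneg fun _ => by positivity]
    _ = _ := by ring

/-- error bound for the lag-zero autocovariance
`Γ = Σ_{j≥0} A^j Σ (A^j)ᵀ` of a VAR(1) process, in terms of a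
sub-multiplicative matrix norm `N`, with
`C_A = Σ_j N(A^j)², C_{Aᵀ} = Σ_j N((A^j)ᵀ)²`, etc., and `C_Σ = N(Σ)`. -/
theorem autocovariance_error_bound (d : ℕ)
    (N : Matrix (Fin d) (Fin d) ℝ → ℝ)
    (hN_nonneg : ∀ M, 0 ≤ N M)
    (hN_add : ∀ M₁ M₂, N (M₁ + M₂) ≤ N M₁ + N M₂)
    (hN_smul : ∀ (c : ℝ) M, N (c • M) = |c| * N M)
    (hN_mul : ∀ M₁ M₂, N (M₁ * M₂) ≤ N M₁ * N M₂)
    (A Ahat S Shat : Matrix (Fin d) (Fin d) ℝ)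
    (CA CAt CAhat CAhatT : ℝ)
    (hCA : HasSum (fun j : ℕ => N (A ^ j) ^ 2) CA)
    (hCAt : HasSum (fun j : ℕ => N ((A ^ j).transpose) ^ 2) CAt)
    (hCAhat : HasSum (fun j : ℕ => N (Ahat ^ j) ^ 2) CAhat)
    (hCAhatT : HasSum (fun j : ℕ => N ((Ahat ^ j).transpose) ^ 2) CAhatT)
    (Γ Γhat : Matrix (Fin d) (Fin d) ℝ)
    (hΓ : HasSum (fun j : ℕ => A ^ j * S * (A ^ j).transpose) Γ)
    (hΓhat : HasSum (fun j : ℕ => Ahat ^ j * Shat * (Ahat ^ j).transpose) Γhat) :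
    N (Γhat - Γ) ≤
      N (Ahat - A) * N S * (CAhat + CAt) * (CA + CAt) / 4 +
      N (Shat - S) * (CAhat + CAt) / 2 +
      N (Ahat.transpose - A.transpose) * (N S + N (Shat - S)) *
        (CAhat + CAt) * (CAhat + CAhatT) / 4 :=
  autocovariance_error_bound_general d N hN_add hN_smul hN_mul A Ahat S Shat CA CAt CAhat CAhatT hCA
    hCAt hCAhat hCAhatT Γ Γhat hΓ hΓhat
end

section
/- Let X_t be a stable VAR(p) process with companion matrix 𝔸 (ρ(𝔸) < 1), innovation covariance Σ_ε, and lag-0 stacked autocovariance Γ^{(st)}(0). Then the spectral-norm bound ‖Γ^{(st)}(0)^{-1}‖₂ ≤ (1 + Σ_{s=1}^p ‖A_s‖₂)² · ‖Σ_ε^{-1}‖₂ holds, provided Σ_ε is positive definite. -/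
open Finset

/-- Operator norm induced by the Euclidean (2-)norm (spectral norm). -/
noncomputable def opNorm2 {m : Type*} [Fintype m] (A : Matrix m m ℝ) : ℝ :=
  sSup {y : ℝ | ∃ x : m → ℝ, Real.sqrt (∑ j, (x j) ^ 2) = 1 ∧
    y = Real.sqrt (∑ i, (A.mulVec x i) ^ 2)}

/-- The stacked innovation covariance `Σ_U = 𝔼 Σ_ε 𝔼ᵀ` (nonzero only in the
top-left `d × d` block). -/
def stackedSigma {p d : ℕ} (Sε : Matrix (Fin d) (Fin d) ℝ) :
    Matrix (Fin p × Fin d) (Fin p × Fin d) ℝ := fun x y =>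
  if x.1.val = 0 ∧ y.1.val = 0 then Sε x.2 y.2 else 0

/-!
Put `w_t = (𝔸ᵗ)ᵀ v` and let `u_t` be the top `d`-block of `w_t`. The terms of the series for
`Γ(0)` give `vᵀ Γ(0) v = ∑ⱼ u_jᵀ Σ_ε u_j ≥ ‖Σ_ε⁻¹‖⁻¹ ∑_{t<p} ‖u_t‖²`. The shift structure of the
companion matrix telescopes to `v_t = u_t - ∑_{r<t} A_rᵀ u_{t-1-r}`, so Minkowski's inequality
gives `‖v‖ ≤ (1 + ∑ₛ ‖A_s‖) (∑_{t<p} ‖u_t‖²)^{1/2}`. Together,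
`‖v‖² ≤ (1 + ∑ₛ ‖A_s‖)² ‖Σ_ε⁻¹‖ vᵀ Γ(0) v`, and such a coercivity bound controls `‖Γ(0)⁻¹‖`.
-/

open Matrix WithLp
open scoped Matrix.Norms.L2Operator

section EuclideanNorm

variable {n : Type*} [Fintype n]

theorem norm_toLp_sq (x : n → ℝ) : ‖toLp 2 x‖ ^ 2 = x ⬝ᵥ x := by
  simpa [dotProduct, sq] using EuclideanSpace.real_norm_sq_eq (toLp 2 x)

theorem dotProduct_le_norm_mul_norm (x y : n → ℝ) : x ⬝ᵥ y ≤ ‖toLp 2 x‖ * ‖toLp 2 y‖ := by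
  simpa [EuclideanSpace.inner_toLp_toLp, dotProduct_comm] using
    real_inner_le_norm (toLp 2 x : EuclideanSpace ℝ n) (toLp 2 y)

theorem HasSum.dotProduct_mulVec {ι R : Type*} [CommSemiring R] [TopologicalSpace R]
    [IsTopologicalSemiring R] {f : ι → Matrix n n R} {a : Matrix n n R} (h : HasSum f a)
    (v w : n → R) : HasSum (fun j => v ⬝ᵥ f j *ᵥ w) (v ⬝ᵥ a *ᵥ w) := by
  simp only [dotProduct, mulVec, Finset.mul_sum]
  exact hasSum_sum fun i _ => hasSum_sum fun j _ =>
    ((Pi.hasSum.1 (Pi.hasSum.1 h i) j).mul_right (w j)).mul_left (v i)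

variable [DecidableEq n]

theorem opNorm2_eq_l2_opNorm (M : Matrix n n ℝ) : opNorm2 M = ‖M‖ := by
  rw [cstar_norm_def, ← ContinuousLinearMap.sSup_sphere_eq_norm, opNorm2]
  congr 1
  ext y
  constructor
  · rintro ⟨x, hx, rfl⟩
    exact ⟨toLp 2 x, by simpa [EuclideanSpace.norm_eq] using hx, by simp [EuclideanSpace.norm_eq]⟩
  · rintro ⟨x, hx, rfl⟩
    exact ⟨ofLp x, by simpa [EuclideanSpace.norm_eq] using hx, by simp [EuclideanSpace.norm_eq]⟩

theorem Matrix.l2_opNorm_transpose (M : Matrix n n ℝ) : ‖Mᵀ‖ = ‖M‖ := by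
  rw [← conjTranspose_eq_transpose_of_trivial, l2_opNorm_conjTranspose]

theorem Matrix.norm_toLp_mulVec_le (M : Matrix n n ℝ) (x : n → ℝ) :
    ‖toLp 2 (M *ᵥ x)‖ ≤ ‖M‖ * ‖toLp 2 x‖ :=
  (toEuclideanCLM (𝕜 := ℝ) M).le_opNorm (toLp 2 x)

theorem Matrix.PosDef.norm_sq_le_l2_opNorm_inv_mul {S : Matrix n n ℝ} (hS : S.PosDef)
    (x : n → ℝ) : ‖toLp 2 x‖ ^ 2 ≤ ‖S⁻¹‖ * (x ⬝ᵥ S *ᵥ x) := by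
  set y := S⁻¹ *ᵥ x
  have hSy : S *ᵥ y = x := by
    rw [mulVec_mulVec, mul_nonsing_inv _ ((isUnit_iff_isUnit_det S).1 hS.isUnit), one_mulVec]
  have hSyx : y ⬝ᵥ S *ᵥ x = x ⬝ᵥ x := by
    rw [dotProduct_mulVec, ← mulVec_transpose, ← conjTranspose_eq_transpose_of_trivial,
      hS.isHermitian.eq, hSy, dotProduct_comm]
  have cauchySchwarz :=
    LinearMap.BilinForm.apply_mul_apply_le_of_forall_zero_le (toLinearMap₂' ℝ S)
      (fun z => by simpa [toLinearMap₂'_apply'] using hS.posSemidef.dotProduct_mulVec_nonneg z) x y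
  simp only [toLinearMap₂'_apply', hSy, hSyx, ← norm_toLp_sq] at cauchySchwarz
  have hq : 0 ≤ x ⬝ᵥ S *ᵥ x := by simpa using hS.posSemidef.dotProduct_mulVec_nonneg x
  have key : ‖toLp 2 x‖ ^ 2 * ‖toLp 2 x‖ ^ 2 ≤ ‖toLp 2 x‖ ^ 2 * (‖S⁻¹‖ * (x ⬝ᵥ S *ᵥ x)) :=
    calc _ ≤ x ⬝ᵥ S *ᵥ x * (y ⬝ᵥ x) := cauchySchwarz
      _ ≤ x ⬝ᵥ S *ᵥ x * (‖toLp 2 y‖ * ‖toLp 2 x‖) := by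
        gcongr; exact dotProduct_le_norm_mul_norm y x
      _ ≤ x ⬝ᵥ S *ᵥ x * (‖S⁻¹‖ * ‖toLp 2 x‖ * ‖toLp 2 x‖) := by
        gcongr; exact norm_toLp_mulVec_le _ _
      _ = _ := by ring
  nlinarith [mul_nonneg (norm_nonneg S⁻¹) hq]

theorem Matrix.l2_opNorm_inv_le_of_norm_sq_le {M : Matrix n n ℝ} {c : ℝ} (hc : 0 ≤ c)
    (h : ∀ x, ‖toLp 2 x‖ ^ 2 ≤ c * (x ⬝ᵥ M *ᵥ x)) : ‖M⁻¹‖ ≤ c := by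
  have hM : IsUnit M := by
    refine mulVec_injective_iff_isUnit.1 <|
      (injective_iff_map_eq_zero (mulVecLin M)).2 fun x hx => ?_
    rw [mulVecLin_apply] at hx
    simpa [hx] using h x
  have bound (x : n → ℝ) : ‖toLp 2 (M⁻¹ *ᵥ x)‖ ≤ c * ‖toLp 2 x‖ := by
    have hy : M *ᵥ (M⁻¹ *ᵥ x) = x := by
      rw [mulVec_mulVec, mul_nonsing_inv _ ((isUnit_iff_isUnit_det M).1 hM), one_mulVec]
    have key : ‖toLp 2 (M⁻¹ *ᵥ x)‖ ^ 2 ≤ ‖toLp 2 (M⁻¹ *ᵥ x)‖ * (c * ‖toLp 2 x‖) :=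
      calc _ ≤ c * ((M⁻¹ *ᵥ x) ⬝ᵥ M *ᵥ (M⁻¹ *ᵥ x)) := h _
        _ ≤ c * (‖toLp 2 (M⁻¹ *ᵥ x)‖ * ‖toLp 2 x‖) := by
          rw [hy]; gcongr; exact dotProduct_le_norm_mul_norm _ x
        _ = _ := by ring
    nlinarith [mul_nonneg hc (norm_nonneg (toLp 2 x))]
  rw [cstar_norm_def]
  exact ContinuousLinearMap.opNorm_le_bound _ hc fun x => bound (ofLp x)

end EuclideanNorm

theorem sum_range_sq_shift_le (y : ℕ → ℝ) (r n : ℕ) :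
    ∑ t ∈ range n, (if r < t then y (t - 1 - r) else 0) ^ 2 ≤ ∑ t ∈ range n, y t ^ 2 := by
  rcases lt_or_ge n (r + 1) with hn | hn
  · rw [Finset.sum_eq_zero fun t ht => by simp at ht; simp [show ¬r < t by omega]]
    exact Finset.sum_nonneg fun t _ => sq_nonneg _
  rw [← Finset.sum_range_add_sum_Ico _ hn, Finset.sum_eq_zero fun t ht => by
      simp at ht; simp [show ¬r < t by omega], zero_add, Finset.sum_Ico_eq_sum_range]
  calc ∑ k ∈ range (n - (r + 1)), (if r < r + 1 + k then y (r + 1 + k - 1 - r) else 0) ^ 2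
      = ∑ k ∈ range (n - (r + 1)), y k ^ 2 :=
        Finset.sum_congr rfl fun k _ => by
          rw [if_pos (by omega), show r + 1 + k - 1 - r = k by omega]
    _ ≤ ∑ t ∈ range n, y t ^ 2 :=
        Finset.sum_le_sum_of_subset_of_nonneg (Finset.range_subset_range.2 (by omega))
          fun _ _ _ => sq_nonneg _

theorem sum_range_sq_add_conv_le (b x : ℕ → ℝ) (hb : ∀ r, 0 ≤ b r) (n : ℕ) :
    ∑ t ∈ range n, (x t + ∑ r ∈ range t, b r * x (t - 1 - r)) ^ 2 ≤
      (1 + ∑ r ∈ range n, b r) ^ 2 * ∑ t ∈ range n, x t ^ 2 := by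
  let seq (y : ℕ → ℝ) : EuclideanSpace ℝ (Fin n) := toLp 2 fun t => y t
  have norm_seq (y : ℕ → ℝ) : ‖seq y‖ ^ 2 = ∑ t ∈ range n, y t ^ 2 := by
    rw [EuclideanSpace.real_norm_sq_eq, ← Fin.sum_univ_eq_sum_range]
  let shift (r t : ℕ) : ℝ := if r < t then x (t - 1 - r) else 0
  have norm_shift (r : ℕ) : ‖seq (shift r)‖ ≤ ‖seq x‖ := by
    refine le_of_pow_le_pow_left₀ two_ne_zero (norm_nonneg _) ?_
    rw [norm_seq, norm_seq]
    exact sum_range_sq_shift_le x r n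
  have conv : seq (fun t => x t + ∑ r ∈ range t, b r * x (t - 1 - r)) =
      seq x + ∑ r ∈ range n, b r • seq (shift r) := by
    ext t
    simp only [seq, shift, PiLp.add_apply, WithLp.ofLp_sum, Finset.sum_apply, PiLp.smul_apply,
      smul_eq_mul, mul_ite, mul_zero]
    rw [← Finset.sum_filter]
    congr 2
    ext r
    simp only [Finset.mem_range, Finset.mem_filter]
    omega
  have minkowski : ‖seq (fun t => x t + ∑ r ∈ range t, b r * x (t - 1 - r))‖ ≤
      (1 + ∑ r ∈ range n, b r) * ‖seq x‖ := by
    rw [conv]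
    calc _ ≤ ‖seq x‖ + ∑ r ∈ range n, b r * ‖seq (shift r)‖ := by
          refine (norm_add_le _ _).trans ?_
          gcongr
          refine (norm_sum_le _ _).trans_eq ?_
          simp [norm_smul, abs_of_nonneg (hb _)]
      _ ≤ ‖seq x‖ + ∑ r ∈ range n, b r * ‖seq x‖ := by
          gcongr with r; exacts [hb r, norm_shift r]
      _ = _ := by rw [← Finset.sum_mul]; ring
  rw [← norm_seq, ← norm_seq, ← mul_pow]
  exact pow_le_pow_left₀ (norm_nonneg _) minkowski 2

section Companion

variable {p d : ℕ}

/-- Blocks and lag coefficients are indexed by `ℕ` and extended by zero from `p` on, so that the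
block recursion `stackBlock_companion_transpose_mulVec` holds without side conditions. -/
def stackBlock (x : Fin p × Fin d → ℝ) (t : ℕ) : Fin d → ℝ :=
  fun i => if h : t < p then x (⟨t, h⟩, i) else 0

def lagCoeff (A : Fin p → Matrix (Fin d) (Fin d) ℝ) (s : ℕ) : Matrix (Fin d) (Fin d) ℝ :=
  if h : s < p then A ⟨s, h⟩ else 0

theorem norm_toLp_sq_eq_sum_stackBlock (x : Fin p × Fin d → ℝ) :
    ‖toLp 2 x‖ ^ 2 = ∑ t ∈ range p, ‖toLp 2 (stackBlock x t)‖ ^ 2 := by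
  simp_rw [EuclideanSpace.real_norm_sq_eq]
  rw [Fintype.sum_prod_type, ← Fin.sum_univ_eq_sum_range]
  simp [stackBlock]

theorem dotProduct_stackedSigma_mulVec (Sε : Matrix (Fin d) (Fin d) ℝ)
    (x : Fin p × Fin d → ℝ) :
    x ⬝ᵥ stackedSigma Sε *ᵥ x = stackBlock x 0 ⬝ᵥ Sε *ᵥ stackBlock x 0 := by
  cases p with
  | zero => simp [dotProduct, stackBlock]
  | succ q =>
    simp [dotProduct, mulVec, stackedSigma, stackBlock, Fintype.sum_prod_type, Fin.sum_univ_succ]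

theorem stackBlock_companion_transpose_mulVec (A : Fin p → Matrix (Fin d) (Fin d) ℝ)
    (x : Fin p × Fin d → ℝ) (k : ℕ) :
    stackBlock ((companion A)ᵀ *ᵥ x) k =
      (lagCoeff A k)ᵀ *ᵥ stackBlock x 0 + stackBlock x (k + 1) := by
  ext i
  cases p with
  | zero => simp [stackBlock, lagCoeff]
  | succ q =>
    by_cases hk : k < q + 1
    · simp [stackBlock, lagCoeff, companion, hk, mulVec, dotProduct, Fintype.sum_prod_type,
        Fin.sum_univ_succ]
      split_ifs with h
      · rw [Fintype.sum_eq_single ⟨k, h⟩ fun m hm => ?_]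
        · simp [Fin.succ]
        · exact Finset.sum_eq_zero fun j _ => if_neg fun hc => hm (Fin.ext hc.1)
      · exact Finset.sum_eq_zero fun m _ => Finset.sum_eq_zero fun j _ =>
          if_neg fun hc : (m : ℕ) = k ∧ j = i => h (hc.1 ▸ m.isLt)
    · have : ¬k < q := by omega
      simp [stackBlock, lagCoeff, hk, this]

theorem stackBlock_eq_sub_sum_lagCoeff (A : Fin p → Matrix (Fin d) (Fin d) ℝ)
    (x : Fin p × Fin d → ℝ) (t : ℕ) :
    stackBlock x t = stackBlock ((companion A ^ t)ᵀ *ᵥ x) 0 -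
      ∑ r ∈ range t, (lagCoeff A r)ᵀ *ᵥ stackBlock ((companion A ^ (t - 1 - r))ᵀ *ᵥ x) 0 := by
  set f : ℕ → ℕ → Fin d → ℝ := fun s k => stackBlock ((companion A ^ s)ᵀ *ᵥ x) k
  have step (s k : ℕ) : f (s + 1) k = (lagCoeff A k)ᵀ *ᵥ f s 0 + f s (k + 1) := by
    simp only [f]
    rw [pow_succ, transpose_mul, ← mulVec_mulVec, stackBlock_companion_transpose_mulVec]
  have diff : ∀ r ∈ range t, f (t - r) r - f (t - (r + 1)) (r + 1) =
      (lagCoeff A r)ᵀ *ᵥ f (t - 1 - r) 0 := by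
    intro r hr
    obtain ⟨s, rfl⟩ : ∃ s, t = s + 1 + r := ⟨t - 1 - r, by simp at hr; omega⟩
    rw [show s + 1 + r - r = s + 1 by omega, show s + 1 + r - (r + 1) = s by omega,
      show s + 1 + r - 1 - r = s by omega, step]
    abel
  have hx : f 0 t = stackBlock x t := by simp [f]
  rw [← Finset.sum_congr rfl diff, Finset.sum_range_sub', Nat.sub_zero, Nat.sub_self, hx]
  abel

theorem norm_sq_le_sum_companion_blocks (A : Fin p → Matrix (Fin d) (Fin d) ℝ)
    (v : Fin p × Fin d → ℝ) :
    ‖toLp 2 v‖ ^ 2 ≤ (1 + ∑ s, ‖A s‖) ^ 2 *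
      ∑ t ∈ range p, ‖toLp 2 (stackBlock ((companion A ^ t)ᵀ *ᵥ v) 0)‖ ^ 2 := by
  set u : ℕ → Fin d → ℝ := fun t => stackBlock ((companion A ^ t)ᵀ *ᵥ v) 0
  have hblock (t : ℕ) : ‖toLp 2 (stackBlock v t)‖ ≤
      ‖toLp 2 (u t)‖ + ∑ r ∈ range t, ‖lagCoeff A r‖ * ‖toLp 2 (u (t - 1 - r))‖ := by
    rw [stackBlock_eq_sub_sum_lagCoeff A v t, toLp_sub, toLp_sum]
    refine (norm_sub_le _ _).trans ?_
    gcongr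
    refine (norm_sum_le _ _).trans ?_
    gcongr with r
    rw [← l2_opNorm_transpose]
    exact norm_toLp_mulVec_le _ _
  have hcoeff : ∑ r ∈ range p, ‖lagCoeff A r‖ = ∑ s, ‖A s‖ := by
    rw [← Fin.sum_univ_eq_sum_range]
    simp [lagCoeff]
  calc ‖toLp 2 v‖ ^ 2 = ∑ t ∈ range p, ‖toLp 2 (stackBlock v t)‖ ^ 2 :=
        norm_toLp_sq_eq_sum_stackBlock v
    _ ≤ ∑ t ∈ range p, (‖toLp 2 (u t)‖ +
          ∑ r ∈ range t, ‖lagCoeff A r‖ * ‖toLp 2 (u (t - 1 - r))‖) ^ 2 := by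
        gcongr with t; exact hblock t
    _ ≤ _ := hcoeff ▸ sum_range_sq_add_conv_le _ _ (fun r => norm_nonneg _) p

theorem sum_sq_companion_blocks_le {Sε : Matrix (Fin d) (Fin d) ℝ} (hSε : Sε.PosDef)
    {A : Fin p → Matrix (Fin d) (Fin d) ℝ} {Γ0 : Matrix (Fin p × Fin d) (Fin p × Fin d) ℝ}
    (hΓ0 : HasSum (fun j : ℕ =>
        companion A ^ j * stackedSigma Sε * (companion A ^ j).transpose) Γ0)
    (v : Fin p × Fin d → ℝ) :
    ∑ t ∈ range p, ‖toLp 2 (stackBlock ((companion A ^ t)ᵀ *ᵥ v) 0)‖ ^ 2 ≤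
      ‖Sε⁻¹‖ * (v ⬝ᵥ Γ0 *ᵥ v) := by
  set u : ℕ → Fin d → ℝ := fun t => stackBlock ((companion A ^ t)ᵀ *ᵥ v) 0
  have hterm (j : ℕ) : v ⬝ᵥ (companion A ^ j * stackedSigma Sε * (companion A ^ j)ᵀ) *ᵥ v =
      u j ⬝ᵥ Sε *ᵥ u j := by
    rw [← mulVec_mulVec, ← mulVec_mulVec, dotProduct_mulVec, ← mulVec_transpose,
      dotProduct_stackedSigma_mulVec]
  have hq : HasSum (fun j => u j ⬝ᵥ Sε *ᵥ u j) (v ⬝ᵥ Γ0 *ᵥ v) := by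
    simpa only [hterm] using hΓ0.dotProduct_mulVec v v
  calc ∑ t ∈ range p, ‖toLp 2 (u t)‖ ^ 2
      ≤ ∑ t ∈ range p, ‖Sε⁻¹‖ * (u t ⬝ᵥ Sε *ᵥ u t) := by
        gcongr with t; exact hSε.norm_sq_le_l2_opNorm_inv_mul _
    _ = ‖Sε⁻¹‖ * ∑ t ∈ range p, u t ⬝ᵥ Sε *ᵥ u t := by rw [Finset.mul_sum]
    _ ≤ ‖Sε⁻¹‖ * (v ⬝ᵥ Γ0 *ᵥ v) := by
        gcongr
        exact sum_le_hasSum _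
          (fun j _ => by simpa using hSε.posSemidef.dotProduct_mulVec_nonneg (u j)) hq

end Companion

theorem inv_autocovariance_spectral_bound_general (p d : ℕ)
    (A : Fin p → Matrix (Fin d) (Fin d) ℝ)
    (Sε : Matrix (Fin d) (Fin d) ℝ) (hpd : Sε.PosDef)
    (Γ0 : Matrix (Fin p × Fin d) (Fin p × Fin d) ℝ)
    (hΓ0 : HasSum (fun j : ℕ =>
        companion A ^ j * stackedSigma Sε * (companion A ^ j).transpose) Γ0) :
    opNorm2 Γ0⁻¹ ≤ (1 + ∑ s : Fin p, opNorm2 (A s)) ^ 2 * opNorm2 Sε⁻¹ := by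
  simp only [opNorm2_eq_l2_opNorm]
  refine l2_opNorm_inv_le_of_norm_sq_le (by positivity) fun v => ?_
  calc ‖toLp 2 v‖ ^ 2
      ≤ (1 + ∑ s, ‖A s‖) ^ 2 *
          ∑ t ∈ range p, ‖toLp 2 (stackBlock ((companion A ^ t)ᵀ *ᵥ v) 0)‖ ^ 2 :=
        norm_sq_le_sum_companion_blocks A v
    _ ≤ (1 + ∑ s, ‖A s‖) ^ 2 * (‖Sε⁻¹‖ * (v ⬝ᵥ Γ0 *ᵥ v)) := by
        gcongr; exact sum_sq_companion_blocks_le hpd hΓ0 v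
    _ = _ := by ring

/-- for a stable VAR(p) process with positive definite
innovation covariance, the inverse of the lag-zero stacked autocovariance
satisfies `‖Γ^{(st)}(0)⁻¹‖₂ ≤ (1 + Σ_s ‖A_s‖₂)² ‖Σ_ε⁻¹‖₂`. -/
theorem inv_autocovariance_spectral_bound (p d : ℕ) (hp : 0 < p) (hd : 0 < d)
    (A : Fin p → Matrix (Fin d) (Fin d) ℝ)
    (Sε : Matrix (Fin d) (Fin d) ℝ) (hpd : Sε.PosDef)
    (hstable : ∀ μ ∈ spectrum ℂ ((companion A).map (Complex.ofReal)),
        ‖μ‖ < 1)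
    (Γ0 : Matrix (Fin p × Fin d) (Fin p × Fin d) ℝ)
    (hΓ0 : HasSum (fun j : ℕ =>
        companion A ^ j * stackedSigma Sε * (companion A ^ j).transpose) Γ0) :
    opNorm2 Γ0⁻¹ ≤ (1 + ∑ s : Fin p, opNorm2 (A s)) ^ 2 * opNorm2 Sε⁻¹ :=
  inv_autocovariance_spectral_bound_general p d A Sε hpd Γ0 hΓ0
end
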